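/- arXiv:1706.01176 — 2 statements merged into one kernel-verified Lean document; each statement's English description precedes it below -/
import Mathlib

section
/- Let r, r̃ ∈ ℝ^{m+1} and suppose there exists an s×s matrix T such that (r̃ ⊗ I_s) = (r ⊗ I_s) T. Then r̃ and r are collinear: there exists a scalar τ ∈ ℝ such that r̃ = τ r (indeed T = τ I_s when r ≠ 0). -/
/-!
Comparing the `((i, k), j)` entries of `r̃ ⊗ I = (r ⊗ I) T = r ⊗ T` gives `r̃ᵢ δₖⱼ = rᵢ Tₖⱼ`.
The diagonal entries show `r̃ = Tₖₖ • r` for any fixed `k`; if `rᵢ ≠ 0`, cancelling `rᵢ` shows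
`T = Tₖₖ • I`.
-/

open Matrix

namespace Matrix

variable {ι m n R : Type*}

/-- The Kronecker product `r ⊗ A` of a column vector with a matrix. -/
def vecKron [Mul R] (r : ι → R) (A : Matrix m n R) : Matrix (ι × m) n R :=
  of fun p j => r p.1 * A p.2 j

theorem vecKron_eq_vecKron_iff [Mul R] {r r' : ι → R} {A B : Matrix m n R} :
    vecKron r A = vecKron r' B ↔ ∀ i k j, r i * A k j = r' i * B k j :=
  ⟨fun h i k j => congrFun (congrFun h (i, k)) j, fun h => ext fun p j => h p.1 p.2 j⟩

theorem vecKron_mul [Fintype n] [CommSemiring R] {l : Type*} (r : ι → R) (A : Matrix m n R)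
    (B : Matrix n l R) : vecKron r A * B = vecKron r (A * B) := by
  ext p j
  simp [vecKron, mul_apply, Finset.mul_sum, mul_assoc]

variable [DecidableEq n] {r rt : ι → R} {T : Matrix n n R}

theorem eq_smul_of_vecKron_one_eq [CommSemiring R]
    (h : vecKron rt (1 : Matrix n n R) = vecKron r T) (k : n) : rt = T k k • r := by
  ext i
  simpa [mul_comm] using vecKron_eq_vecKron_iff.mp h i k k

theorem eq_smul_one_of_vecKron_one_eq [CommRing R] [IsDomain R]
    (h : vecKron rt (1 : Matrix n n R) = vecKron r T) (hr : r ≠ 0) (k : n) :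
    T = T k k • 1 := by
  obtain ⟨i, hi⟩ := Function.ne_iff.mp hr
  ext k' j
  apply mul_left_cancel₀ hi
  rw [← vecKron_eq_vecKron_iff.mp h, eq_smul_of_vecKron_one_eq h k]
  simp [mul_comm, mul_assoc]

end Matrix

/-- If `(r̃ ⊗ I_s) = (r ⊗ I_s) T` for some `s × s` matrix `T` (with `s ≥ 1`),
then `r̃ = τ r` for some scalar `τ`, and indeed `T = τ I_s` when `r ≠ 0`. -/
theorem kronecker_collinear (m s : ℕ) (hs : 0 < s)
    (r rt : Fin (m + 1) → ℝ) (T : Matrix (Fin s) (Fin s) ℝ)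
    (hT : (Matrix.of fun (p : Fin (m + 1) × Fin s) (j : Fin s) =>
            rt p.1 * (1 : Matrix (Fin s) (Fin s) ℝ) p.2 j) =
          (Matrix.of fun (p : Fin (m + 1) × Fin s) (j : Fin s) =>
            r p.1 * (1 : Matrix (Fin s) (Fin s) ℝ) p.2 j) * T) :
    ∃ τ : ℝ, rt = τ • r ∧ (r ≠ 0 → T = τ • (1 : Matrix (Fin s) (Fin s) ℝ)) := by
  have h : vecKron rt (1 : Matrix (Fin s) (Fin s) ℝ) =
      vecKron r (1 : Matrix (Fin s) (Fin s) ℝ) * T := hT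
  rw [vecKron_mul, Matrix.one_mul] at h
  let k : Fin s := ⟨0, hs⟩
  exact ⟨T k k, eq_smul_of_vecKron_one_eq h k, fun hr => eq_smul_one_of_vecKron_one_eq h hr k⟩
end

section
/- Let 𝒱_{m+1} be D-orthonormal and 𝒜𝒱_m = 𝒱_{m+1}(H̄_m ⊗ I_s). For R_0 = β V_1 and X_m = X_0 + 𝒱_m(y ⊗ I_s), the residual R_m = R_0 − 𝒜𝒱_m(y ⊗ I_s) satisfies ‖R_m‖_D = ‖βe₁ − H̄_m y‖₂ for every y ∈ ℝ^m; hence minimizing ‖R_m‖_D over y is equivalent to the small least-squares problem min_y ‖βe₁ − H̄_m y‖₂. -/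
open Matrix

/-- With `𝒱_{m+1}` `D`-orthonormal and `𝒜𝒱_m = 𝒱_{m+1}(H̄_m ⊗ I_s)`, for `R₀ = β V₁` the
residual `R_m = R₀ − 𝒜𝒱_m(y ⊗ I_s)` satisfies `‖R_m‖_D = ‖β e₁ − H̄_m y‖₂` for every `y`;
hence minimizing `‖R_m‖_D` over `y` is equivalent to the small least-squares problem. -/
theorem weighted_gmres_residual_norm (n s m : ℕ) (d : Fin n → ℝ) (hd : ∀ i, 0 < d i)
    (A : Matrix (Fin n) (Fin n) ℝ) (B : Matrix (Fin s) (Fin s) ℝ)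
    (V : Fin (m + 1) → Matrix (Fin n) (Fin s) ℝ)
    (H : Matrix (Fin (m + 1)) (Fin m) ℝ) (β : ℝ)
    (horth : ∀ i j, Matrix.trace ((V j)ᵀ * Matrix.diagonal d * V i) = if i = j then 1 else 0)
    (harnoldi : ∀ j : Fin m,
        A * V j.castSucc + V j.castSucc * B = ∑ i, H i j • V i) :
    (∀ y : Fin m → ℝ,
        Real.sqrt (Matrix.trace
            ((β • V 0 - ∑ j, y j • (A * V j.castSucc + V j.castSucc * B))ᵀ *
              Matrix.diagonal d *
              (β • V 0 - ∑ j, y j • (A * V j.castSucc + V j.castSucc * B)))) =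
          Real.sqrt (∑ i, ((β • (Pi.single 0 1 : Fin (m + 1) → ℝ) - H *ᵥ y) i) ^ 2)) ∧
    (∀ y : Fin m → ℝ,
        (∀ z : Fin m → ℝ,
            Real.sqrt (Matrix.trace
                ((β • V 0 - ∑ j, y j • (A * V j.castSucc + V j.castSucc * B))ᵀ *
                  Matrix.diagonal d *
                  (β • V 0 - ∑ j, y j • (A * V j.castSucc + V j.castSucc * B)))) ≤
              Real.sqrt (Matrix.trace
                ((β • V 0 - ∑ j, z j • (A * V j.castSucc + V j.castSucc * B))ᵀ *
                  Matrix.diagonal d *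
                  (β • V 0 - ∑ j, z j • (A * V j.castSucc + V j.castSucc * B))))) ↔
          (∀ z : Fin m → ℝ,
            Real.sqrt (∑ i, ((β • (Pi.single 0 1 : Fin (m + 1) → ℝ) - H *ᵥ y) i) ^ 2) ≤
              Real.sqrt (∑ i, ((β • (Pi.single 0 1 : Fin (m + 1) → ℝ) - H *ᵥ z) i) ^ 2))) := by
  have hR : ∀ y : Fin m → ℝ,
      β • V 0 - ∑ j, y j • (A * V j.castSucc + V j.castSucc * B) =
        ∑ i, ((β • (Pi.single 0 1 : Fin (m + 1) → ℝ) - H *ᵥ y) i) • V i := by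
    intro y
    simp only [harnoldi, Pi.sub_apply, Pi.smul_apply, sub_smul, Finset.sum_sub_distrib]
    congr 1
    · rw [Finset.sum_eq_single (0 : Fin (m + 1))]
      · simp
      · intro b _ hb; simp [Pi.single_apply, hb]
      · simp
    · simp only [Finset.smul_sum, smul_smul, mulVec, dotProduct, Finset.sum_smul]
      rw [Finset.sum_comm]
      exact Finset.sum_congr rfl fun i _ => Finset.sum_congr rfl fun j _ => by rw [mul_comm]
  have htr : ∀ c : Fin (m + 1) → ℝ,
      Matrix.trace ((∑ i, c i • V i)ᵀ * Matrix.diagonal d * (∑ i, c i • V i)) =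
        ∑ i, c i ^ 2 := by
    intro c
    simp only [Matrix.transpose_sum, Matrix.transpose_smul, Matrix.sum_mul, Matrix.mul_sum,
      Matrix.smul_mul, Matrix.mul_smul, Matrix.trace_sum, Matrix.trace_smul, smul_eq_mul,
      horth]
    simp [Finset.mul_sum, mul_ite, pow_two]
  have hmain : ∀ y : Fin m → ℝ,
      Real.sqrt (Matrix.trace
          ((β • V 0 - ∑ j, y j • (A * V j.castSucc + V j.castSucc * B))ᵀ *
            Matrix.diagonal d *
            (β • V 0 - ∑ j, y j • (A * V j.castSucc + V j.castSucc * B)))) =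
        Real.sqrt (∑ i, ((β • (Pi.single 0 1 : Fin (m + 1) → ℝ) - H *ᵥ y) i) ^ 2) := by
    intro y
    rw [hR y, htr]
  refine ⟨hmain, fun y => ?_⟩
  constructor
  · intro h z
    rw [← hmain y, ← hmain z]; exact h z
  · intro h z
    rw [hmain y, hmain z]; exact h z
end
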